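/- arXiv:2505.07424 — 2 statements merged into one kernel-verified Lean document; each statement's English description precedes it below -/
import Mathlib

section
/- Let G = A *_C B be an amalgamated free product and let g = a₁b₁a₂b₂⋯ be a reduced form of g (an alternating product of elements of A and B in which no interior term lies in C). If the reduced form has at least one non-trivial term, then g ≠ e in G. -/
open Monoid

/-- Normal form theorem for amalgamated products (Serre): in an amalgamated product
(a pushout of a family of groups `G i` along injections `φ i : C →* G i`; for the
binary amalgam `A *_C B` take the index type to be `Bool`), if `g` is represented by a
reduced word (an alternating product of elements of the factors with no letter lying in
the amalgamated subgroup `C`) with at least one non-trivial term, then `g ≠ e`. -/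
theorem stmt_6 {ι : Type*} {C : Type*} [Group C] {G : ι → Type*} [∀ i, Group (G i)]
    (φ : ∀ i, C →* G i) (hφ : ∀ i, Function.Injective (φ i))
    (w : Monoid.CoprodI.Word G) (hred : Monoid.PushoutI.Reduced φ w)
    (hne : w.toList ≠ []) :
    Monoid.PushoutI.ofCoprodI w.prod ≠ (1 : Monoid.PushoutI φ) := by
  intro h
  have hw : w = .empty := hred.eq_empty_of_mem_range hφ (h ▸ (PushoutI.base φ).range.one_mem)
  exact hne (congrArg CoprodI.Word.toList hw)
end

section
/- Let G be a group decomposed as G = G₁ * ⋯ * G_p * F_q (Grushko decomposition) with F_q free of rank q ≥ 2, and let N be the normal closure of G₁ ∪ ⋯ ∪ G_p in G, so G/N ≅ F_q. Suppose every automorphism of G preserves N. Then the induced map Out(G) → Out(F_q) is a surjective group homomorphism; in particular, since Out(F_q) is infinite for q ≥ 2, Out(G) is infinite. -/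
/-- The outer automorphism group `Out(G) = Aut(G)/Inn(G)`, where the subgroup of inner
automorphisms is realized (as a normal subgroup) as the normal closure of the range of the
conjugation homomorphism `G →* Aut(G)` (which equals that range, since it is normal). -/
def OutAut (G : Type*) [Group G] :=
  MulAut G ⧸ Subgroup.normalClosure (Set.range (MulAut.conj : G →* MulAut G))

noncomputable instance (G : Type*) [Group G] : Group (OutAut G) :=
  QuotientGroup.Quotient.group _

/-!
Since `N` is the kernel of the projection `π : G → F_q` and is characteristic, every automorphism
`ψ` of `G` descends to the automorphism `π g ↦ π (ψ g)` of `F_q`; conjugation by `g` descends to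
conjugation by `π g`, so this induces `Out(G) → Out(F_q)`. It is onto because an automorphism `φ`
of `F_q` lifts to `G ≅ (G₁ * ⋯ * G_p) * F_q` as `id * φ`.

`Out(F_q)` is infinite: for generators `x_i ≠ x_j`, the exponent sum of `x_i` in the image of `x_j`
takes values in an abelian group, hence is unchanged by inner automorphisms, and the transvections
`x_j ↦ x_j x_iⁿ` give it every value `n`.
-/

namespace MulAut

variable {G F : Type*} [Group G] [Group F]

lemma normalClosure_range_conj :
    Subgroup.normalClosure (Set.range (conj : G →* MulAut G)) = (conj : G →* MulAut G).range := by
  have : (conj : G →* MulAut G).range.Normal := ⟨by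
    rintro _ ⟨g, rfl⟩ ψ
    exact ⟨ψ g, by ext; simp⟩⟩
  rw [← MonoidHom.coe_range, Subgroup.normalClosure_eq_self]

noncomputable def quotient (K : Subgroup G) [K.Normal] [hK : K.Characteristic] :
    MulAut G →* MulAut (G ⧸ K) where
  toFun ψ := QuotientGroup.congr K K ψ (Subgroup.characteristic_iff_map_eq.mp hK ψ)
  map_one' := by
    ext x
    induction x using QuotientGroup.induction_on
    rfl
  map_mul' ψ ψ' := by
    ext x
    induction x using QuotientGroup.induction_on
    rfl

lemma quotient_apply_mk (K : Subgroup G) [K.Normal] [K.Characteristic] (ψ : MulAut G) (g : G) :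
    quotient K ψ g = ψ g :=
  rfl

noncomputable def inducedOfSurjective (π : G →* F) (hπ : Function.Surjective π)
    [π.ker.Characteristic] : MulAut G →* MulAut F :=
  (congr (QuotientGroup.quotientKerEquivOfSurjective π hπ)).toMonoidHom.comp (quotient π.ker)

variable {π : G →* F} (hπ : Function.Surjective π) [π.ker.Characteristic]

lemma inducedOfSurjective_apply (ψ : MulAut G) (g : G) :
    inducedOfSurjective π hπ ψ (π g) = π (ψ g) := by
  have hmk : (QuotientGroup.quotientKerEquivOfSurjective π hπ).symm (π g) = g :=
    (MulEquiv.symm_apply_eq _).mpr rfl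
  simp only [inducedOfSurjective, MonoidHom.comp_apply, MulEquiv.coe_toMonoidHom, congr_apply,
    MulEquiv.trans_apply, hmk, quotient_apply_mk]
  rfl

lemma inducedOfSurjective_conj (g : G) :
    inducedOfSurjective π hπ (conj g) = conj (π g) := by
  ext x
  obtain ⟨y, rfl⟩ := hπ x
  simp [inducedOfSurjective_apply]

lemma inducedOfSurjective_surjective
    (hlift : ∀ φ : MulAut F, ∃ ψ : MulAut G, ∀ g, π (ψ g) = φ (π g)) :
    Function.Surjective (inducedOfSurjective π hπ) := by
  intro φ
  obtain ⟨ψ, hψ⟩ := hlift φ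
  refine ⟨ψ, MulEquiv.ext fun x => ?_⟩
  obtain ⟨g, rfl⟩ := hπ x
  rw [inducedOfSurjective_apply, hψ]

end MulAut

namespace OutAut

variable {G H : Type*} [Group G] [Group H]

noncomputable def mk : MulAut G →* OutAut G := QuotientGroup.mk' _

noncomputable def map (A : MulAut G →* MulAut H)
    (hA : ∀ g, ∃ h, A (MulAut.conj g) = MulAut.conj h) : OutAut G →* OutAut H :=
  QuotientGroup.map _ _ A <| Subgroup.normalClosure_le_normal <| by
    rintro _ ⟨g, rfl⟩
    obtain ⟨h, hh⟩ := hA g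
    exact Subgroup.mem_comap.mpr (hh ▸ Subgroup.subset_normalClosure ⟨h, rfl⟩)

lemma map_surjective {A : MulAut G →* MulAut H}
    (hA : ∀ g, ∃ h, A (MulAut.conj g) = MulAut.conj h) (hsurj : Function.Surjective A) :
    Function.Surjective (map A hA) :=
  QuotientGroup.map_surjective_of_surjective _ _ _ (QuotientGroup.mk_surjective.comp hsurj) _

lemma apply_eq_of_mk_eq {M : Type*} [CommGroup M] (χ : G →* M) {ψ ψ' : MulAut G}
    (h : mk ψ = mk ψ') (x : G) : χ (ψ x) = χ (ψ' x) := by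
  obtain ⟨z, hz, rfl⟩ := (QuotientGroup.mk'_eq_mk' _).mp h
  rw [MulAut.normalClosure_range_conj] at hz
  obtain ⟨g, rfl⟩ := hz
  simp [mul_comm]

end OutAut

namespace Monoid.Coprod

variable {M N : Type*} [Group M] [Group N]

lemma ker_snd :
    (snd : M ∗ N →* N).ker = Subgroup.normalClosure (Set.range (inl : M →* M ∗ N)) := by
  set K := Subgroup.normalClosure (Set.range (inl : M →* M ∗ N))
  refine le_antisymm ?_ (Subgroup.normalClosure_le_normal ?_)
  · have hfactor : QuotientGroup.mk' K = ((QuotientGroup.mk' K).comp inr).comp snd := by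
      ext x
      · simpa using Subgroup.subset_normalClosure (Set.mem_range_self x)
      · rfl
    intro x hx
    rw [← QuotientGroup.ker_mk' K, MonoidHom.mem_ker, hfactor, MonoidHom.comp_apply,
      MonoidHom.mem_ker.mp hx, map_one]
  · rintro _ ⟨x, rfl⟩
    exact snd_apply_inl x

lemma snd_map {M' N' : Type*} [Group M'] [Group N'] (f : M →* M') (g : N →* N') (x : M ∗ N) :
    snd (map f g x) = g (snd x) :=
  DFunLike.congr_fun (show snd.comp (map f g) = g.comp snd by ext <;> simp) x

end Monoid.Coprod

namespace FreeGroup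

variable {α : Type*} [DecidableEq α]

def transvectionHom (i j : α) (n : ℤ) : FreeGroup α →* FreeGroup α :=
  lift (Function.update of j (of j * of i ^ n))

variable {i j : α}

lemma transvectionHom_of_self (n : ℤ) : transvectionHom i j n (of j) = of j * of i ^ n := by
  simp [transvectionHom]

lemma transvectionHom_of_ne (n : ℤ) {k : α} (hk : k ≠ j) : transvectionHom i j n (of k) = of k := by
  simp [transvectionHom, hk]

lemma transvectionHom_comp (hij : i ≠ j) (m n : ℤ) :
    (transvectionHom i j m).comp (transvectionHom i j n) = transvectionHom i j (m + n) := by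
  ext k
  by_cases hk : k = j
  · subst hk
    simp [transvectionHom_of_self, transvectionHom_of_ne _ hij, mul_assoc, zpow_add]
  · simp [transvectionHom_of_ne _ hk]

lemma transvectionHom_zero : transvectionHom i j 0 = MonoidHom.id _ := by
  ext k
  by_cases hk : k = j
  · subst hk
    simp [transvectionHom_of_self]
  · simp [transvectionHom_of_ne _ hk]

def transvection (hij : i ≠ j) (n : ℤ) : MulAut (FreeGroup α) :=
  (transvectionHom i j n).toMulEquiv (transvectionHom i j (-n))
    (by rw [transvectionHom_comp hij, neg_add_cancel, transvectionHom_zero])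
    (by rw [transvectionHom_comp hij, add_neg_cancel, transvectionHom_zero])

def exponentSum (i : α) : FreeGroup α →* Multiplicative ℤ :=
  lift (Pi.mulSingle i (Multiplicative.ofAdd 1))

lemma exponentSum_transvection (hij : i ≠ j) (n : ℤ) :
    exponentSum i (transvection hij n (of j)) = Multiplicative.ofAdd n := by
  simp [transvection, transvectionHom_of_self, exponentSum, hij.symm, ← ofAdd_zsmul]

end FreeGroup

instance OutAut.infinite_freeGroup {α : Type*} [Nontrivial α] :
    Infinite (OutAut (FreeGroup α)) := by
  classical
  obtain ⟨i, j, hij⟩ := exists_pair_ne α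
  refine Infinite.of_injective (fun n : ℤ => OutAut.mk (FreeGroup.transvection hij n))
    fun m n h => ?_
  have := OutAut.apply_eq_of_mk_eq (FreeGroup.exponentSum i) h (FreeGroup.of j)
  rwa [FreeGroup.exponentSum_transvection, FreeGroup.exponentSum_transvection,
    Multiplicative.ofAdd.injective.eq_iff] at this

lemma OutAut.exists_surjective_of_mulEquiv_coprod {G M N : Type*} [Group G] [Group M] [Group N]
    (e : G ≃* Monoid.Coprod M N)
    [((Monoid.Coprod.snd : Monoid.Coprod M N →* N).comp
      (e : G →* Monoid.Coprod M N)).ker.Characteristic] :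
    ∃ π : OutAut G →* OutAut N, Function.Surjective π := by
  set π := (Monoid.Coprod.snd : Monoid.Coprod M N →* N).comp (e : G →* Monoid.Coprod M N)
  have hπ : Function.Surjective π := Monoid.Coprod.snd_surjective.comp e.surjective
  have hlift : ∀ φ : MulAut N, ∃ ψ : MulAut G, ∀ g, π (ψ g) = φ (π g) := fun φ =>
    ⟨MulAut.congr e.symm (MulEquiv.coprodCongr (MulEquiv.refl M) φ),
      fun g => by simp [π, Monoid.Coprod.snd_map]⟩
  exact ⟨OutAut.map _ fun g => ⟨π g, MulAut.inducedOfSurjective_conj hπ g⟩,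
    OutAut.map_surjective _ (MulAut.inducedOfSurjective_surjective hπ hlift)⟩

theorem stmt_19_general (p q : ℕ) (hq : 2 ≤ q)
    (Gfac : Fin p → Type) [∀ i, Group (Gfac i)]
    (G : Type) [Group G]
    (e : G ≃* Monoid.Coprod (Monoid.CoprodI Gfac) (FreeGroup (Fin q)))
    (N : Subgroup G)
    (hN : N = Subgroup.normalClosure
      (Set.range fun x : Monoid.CoprodI Gfac => e.symm (Monoid.Coprod.inl x)))
    (hpres : ∀ ψ : MulAut G, N.map ψ.toMonoidHom = N) :
    (∃ π : OutAut G →* OutAut (FreeGroup (Fin q)), Function.Surjective π) ∧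
      Infinite (OutAut G) := by
  have hker : (Monoid.Coprod.snd.comp
      (e : G →* Monoid.Coprod (Monoid.CoprodI Gfac) (FreeGroup (Fin q)))).ker = N := by
    rw [← MonoidHom.comap_ker, Monoid.Coprod.ker_snd, ← Subgroup.comap_normalClosure, hN]
    congr 1
    ext g
    simp only [Set.mem_preimage, Set.mem_range, MulEquiv.eq_symm_apply, eq_comm]
  rw [← hker] at hpres
  have := Subgroup.characteristic_iff_map_eq.mpr hpres
  have := Fin.nontrivial_iff_two_le.mpr hq
  obtain ⟨π, hπ⟩ := OutAut.exists_surjective_of_mulEquiv_coprod e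
  exact ⟨⟨π, hπ⟩, Infinite.of_surjective π hπ⟩

/-- Let `G = G₁ * ⋯ * G_p * F_q` (Grushko decomposition) with `F_q` free of rank `q ≥ 2`,
and let `N` be the normal closure in `G` of the factors `G₁, …, G_p`, so `G/N ≅ F_q`.
If every automorphism of `G` preserves `N`, then there is a surjective homomorphism
`Out(G) → Out(F_q)`; in particular, since `Out(F_q)` is infinite for `q ≥ 2`,
`Out(G)` is infinite. -/
theorem stmt_19 (p q : ℕ) (hq : 2 ≤ q)
    (Gfac : Fin p → Type) [∀ i, Group (Gfac i)]
    (G : Type) [Group G]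
    (e : G ≃* Monoid.Coprod (Monoid.CoprodI Gfac) (FreeGroup (Fin q)))
    (N : Subgroup G) [N.Normal]
    (hN : N = Subgroup.normalClosure
      (Set.range fun x : Monoid.CoprodI Gfac => e.symm (Monoid.Coprod.inl x)))
    (hNiso : Nonempty ((G ⧸ N) ≃* FreeGroup (Fin q)))
    (hpres : ∀ ψ : MulAut G, N.map ψ.toMonoidHom = N) :
    (∃ π : OutAut G →* OutAut (FreeGroup (Fin q)), Function.Surjective π) ∧
      Infinite (OutAut G) :=
  stmt_19_general p q hq Gfac G e N hN hpres
end
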